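/- arXiv:2210.16677 — 3 statements merged into one kernel-verified Lean document; each statement's English description precedes it below -/
import Mathlib

section
/- Fix ε > 0 and let γ₁(t) = (sin(εt), cos(εt), 0) and γ₂(s) = (0, ε cos s + 1, ε sin s). Then for all real s and t, ((γ₁'(t) × γ₂'(s)) · (γ₁(t) − γ₂(s))) / ‖γ₁(t) − γ₂(s)‖³ = ε²(cos s·(cos(εt) − 1) + ε cos(εt)) / (2 + ε² − 2cos(εt) + 4ε cos s · sin²(εt/2))^{3/2}, provided the denominator 2 + ε² − 2cos(εt) + 4ε cos s · sin²(εt/2) is nonzero. -/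
open Real MeasureTheory
open scoped RealInnerProductSpace

/-- A vector in `ℝ³` (with the Euclidean norm) given by its three components. -/
noncomputable def vec3 (x y z : ℝ) : EuclideanSpace ℝ (Fin 3) :=
  (WithLp.equiv 2 (Fin 3 → ℝ)).symm ![x, y, z]

/-- The cross product of two vectors in `ℝ³`. -/
noncomputable def cross3 (a b : EuclideanSpace ℝ (Fin 3)) : EuclideanSpace ℝ (Fin 3) :=
  vec3 (a 1 * b 2 - a 2 * b 1) (a 2 * b 0 - a 0 * b 2) (a 0 * b 1 - a 1 * b 0)

/-!
Both curves are explicit, so the integrand is computed coordinatewise: the numerator is a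
trigonometric polynomial, and `‖γ₁ t - γ₂ s‖³ = (‖γ₁ t - γ₂ s‖²)^(3/2)` with the squared distance
rewritten through `1 - cos (ε t) = 2 sin² (ε t / 2)`.
-/

section Vec3

@[simp]
theorem vec3_apply_zero (x y z : ℝ) : vec3 x y z 0 = x := rfl

@[simp]
theorem vec3_apply_one (x y z : ℝ) : vec3 x y z 1 = y := rfl

@[simp]
theorem vec3_apply_two (x y z : ℝ) : vec3 x y z 2 = z := rfl

theorem vec3_sub_vec3 (a b c x y z : ℝ) :
    vec3 a b c - vec3 x y z = vec3 (a - x) (b - y) (c - z) := by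
  ext i; fin_cases i <;> rfl

theorem cross3_vec3 (a b c x y z : ℝ) :
    cross3 (vec3 a b c) (vec3 x y z) = vec3 (b * z - c * y) (c * x - a * z) (a * y - b * x) :=
  rfl

theorem inner_vec3 (a b c x y z : ℝ) :
    ⟪vec3 a b c, vec3 x y z⟫ = a * x + b * y + c * z := by
  simp only [PiLp.inner_apply, Fin.sum_univ_three, vec3_apply_zero, vec3_apply_one,
    vec3_apply_two, RCLike.inner_apply, conj_trivial]
  ring

theorem norm_vec3_sq (x y z : ℝ) : ‖vec3 x y z‖ ^ 2 = x ^ 2 + y ^ 2 + z ^ 2 := by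
  simp only [EuclideanSpace.norm_sq_eq, Fin.sum_univ_three, vec3_apply_zero, vec3_apply_one,
    vec3_apply_two, Real.norm_eq_abs, sq_abs]

theorem hasDerivAt_vec3 {f₀ f₁ f₂ : ℝ → ℝ} {g₀ g₁ g₂ : ℝ} {u : ℝ}
    (h₀ : HasDerivAt f₀ g₀ u) (h₁ : HasDerivAt f₁ g₁ u) (h₂ : HasDerivAt f₂ g₂ u) :
    HasDerivAt (fun x => vec3 (f₀ x) (f₁ x) (f₂ x)) (vec3 g₀ g₁ g₂) u := by
  have h : HasDerivAt (fun x => ![f₀ x, f₁ x, f₂ x] : ℝ → (Fin 3 → ℝ)) ![g₀, g₁, g₂] u := by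
    rw [hasDerivAt_pi]
    intro i
    fin_cases i
    exacts [h₀, h₁, h₂]
  exact ((PiLp.continuousLinearEquiv 2 ℝ (fun _ : Fin 3 => ℝ)).symm :
      (Fin 3 → ℝ) →L[ℝ] EuclideanSpace ℝ (Fin 3)).hasFDerivAt.comp_hasDerivAt u h

end Vec3

theorem norm_pow_three_eq_rpow {E : Type*} [SeminormedAddCommGroup E] (v : E) :
    ‖v‖ ^ 3 = (‖v‖ ^ 2) ^ ((3 : ℝ) / 2) := by
  rw [rpow_div_two_eq_sqrt 3 (sq_nonneg _), sqrt_sq (norm_nonneg v)]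
  norm_cast

section HopfLink

variable (ε : ℝ)

theorem hasDerivAt_hopf_circle₁ (t : ℝ) :
    HasDerivAt (fun t => vec3 (sin (ε * t)) (cos (ε * t)) 0)
      (vec3 (ε * cos (ε * t)) (-(ε * sin (ε * t))) 0) t := by
  have hlin : HasDerivAt (fun x : ℝ => ε * x) ε t := by
    simpa using (hasDerivAt_id t).const_mul ε
  refine hasDerivAt_vec3 ?_ ?_ (hasDerivAt_const t 0)
  · simpa [mul_comm] using hlin.sin
  · simpa [mul_comm] using hlin.cos

theorem hasDerivAt_hopf_circle₂ (s : ℝ) :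
    HasDerivAt (fun s => vec3 0 (ε * cos s + 1) (ε * sin s))
      (vec3 0 (-(ε * sin s)) (ε * cos s)) s := by
  refine hasDerivAt_vec3 (hasDerivAt_const s 0) ?_ ?_
  · simpa using ((hasDerivAt_cos s).const_mul ε).add_const 1
  · exact (hasDerivAt_sin s).const_mul ε

theorem hopf_dist_sq (t s : ℝ) :
    (sin (ε * t) - 0) ^ 2 + (cos (ε * t) - (ε * cos s + 1)) ^ 2 + (0 - ε * sin s) ^ 2
      = 2 + ε ^ 2 - 2 * cos (ε * t) + 4 * ε * cos s * sin (ε * t / 2) ^ 2 := by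
  have half : sin (ε * t / 2) ^ 2 = (1 - cos (ε * t)) / 2 := by
    rw [sin_sq_eq_half_sub, show 2 * (ε * t / 2) = ε * t by ring]
    ring
  rw [half]
  linear_combination sin_sq_add_cos_sq (ε * t) + ε ^ 2 * sin_sq_add_cos_sq s

theorem hopf_gauss_numerator (t s : ℝ) :
    (-(ε * sin (ε * t)) * (ε * cos s) - 0 * -(ε * sin s)) * (sin (ε * t) - 0)
      + (0 * 0 - ε * cos (ε * t) * (ε * cos s)) * (cos (ε * t) - (ε * cos s + 1))
      + (ε * cos (ε * t) * -(ε * sin s) - -(ε * sin (ε * t)) * 0) * (0 - ε * sin s)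
      = ε ^ 2 * (cos s * (cos (ε * t) - 1) + ε * cos (ε * t)) := by
  linear_combination (-(ε ^ 2 * cos s)) * sin_sq_add_cos_sq (ε * t)
    + ε ^ 3 * cos (ε * t) * sin_sq_add_cos_sq s

end HopfLink

theorem gauss_integrand_hopf_link_general (ε : ℝ)
    (γ₁ : ℝ → EuclideanSpace ℝ (Fin 3)) (γ₂ : ℝ → EuclideanSpace ℝ (Fin 3))
    (hγ₁ : γ₁ = fun t => vec3 (Real.sin (ε * t)) (Real.cos (ε * t)) 0)
    (hγ₂ : γ₂ = fun s => vec3 0 (ε * Real.cos s + 1) (ε * Real.sin s))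
    (t s : ℝ) :
    ⟪cross3 (deriv γ₁ t) (deriv γ₂ s), γ₁ t - γ₂ s⟫ / ‖γ₁ t - γ₂ s‖ ^ 3
      = ε ^ 2 * (Real.cos s * (Real.cos (ε * t) - 1) + ε * Real.cos (ε * t))
        / (2 + ε ^ 2 - 2 * Real.cos (ε * t)
            + 4 * ε * Real.cos s * Real.sin (ε * t / 2) ^ 2) ^ ((3 : ℝ) / 2) := by
  subst hγ₁ hγ₂
  rw [(hasDerivAt_hopf_circle₁ ε t).deriv, (hasDerivAt_hopf_circle₂ ε s).deriv,
    norm_pow_three_eq_rpow, vec3_sub_vec3, norm_vec3_sq, hopf_dist_sq, cross3_vec3, inner_vec3,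
    hopf_gauss_numerator]

theorem gauss_integrand_hopf_link (ε : ℝ) (hε : 0 < ε)
    (γ₁ : ℝ → EuclideanSpace ℝ (Fin 3)) (γ₂ : ℝ → EuclideanSpace ℝ (Fin 3))
    (hγ₁ : γ₁ = fun t => vec3 (Real.sin (ε * t)) (Real.cos (ε * t)) 0)
    (hγ₂ : γ₂ = fun s => vec3 0 (ε * Real.cos s + 1) (ε * Real.sin s))
    (t s : ℝ)
    (hden : 2 + ε ^ 2 - 2 * Real.cos (ε * t)
        + 4 * ε * Real.cos s * Real.sin (ε * t / 2) ^ 2 ≠ 0) :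
    ⟪cross3 (deriv γ₁ t) (deriv γ₂ s), γ₁ t - γ₂ s⟫ / ‖γ₁ t - γ₂ s‖ ^ 3
      = ε ^ 2 * (Real.cos s * (Real.cos (ε * t) - 1) + ε * Real.cos (ε * t))
        / (2 + ε ^ 2 - 2 * Real.cos (ε * t)
            + 4 * ε * Real.cos s * Real.sin (ε * t / 2) ^ 2) ^ ((3 : ℝ) / 2) :=
  gauss_integrand_hopf_link_general ε γ₁ γ₂ hγ₁ hγ₂ t s
end

section
/- As ε → 0⁺, the quantity (1/(4π)) ∫_{−π/ε}^{π/ε} ∫_{−π}^{π} ε²(cos s·(cos(εt) − 1) + ε cos(εt)) / (2 + ε² − 2cos(εt) + 4ε cos s · sin²(εt/2))^{3/2} ds dt tends to 1. (The Gauss linking integral of the ε-parametrized Hopf link tends to 1 as the second circle shrinks: the framing-one configuration.) -/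
/-!
Dividing numerator and denominator by `ε³`, the integrand becomes `N / B ^ (3/2)`, where
`B = ‖γ₁ t - γ₂ s‖² / ε²`. As `ε → 0⁺` we have `N → 1` and `B → 1 + t²` (at scale `ε`, `γ₁` is a
straight line through the centre of the unit circle `γ₂`), and on the range `ε |t| ≤ π`
Jordan's inequality gives `B ≥ (1 + t²) / 9`, so `|N / B ^ (3/2)| ≤ 81 / (1 + t²)`. Dominated
convergence, first in `s` and then in `t` over the growing interval `[-π/ε, π/ε]`, yields the limit
`(1 / 4π) · 2π · ∫ (1 + t²) ^ (-3/2) dt = 1`; the last integral is `2` since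
`sin ∘ arctan = t / √(1 + t²)` is an antiderivative.
-/

open Real Filter MeasureTheory Set
open scoped Topology

lemma rpow_three_halves_eq_mul_sqrt {x : ℝ} (hx : 0 ≤ x) : x ^ (3 / 2 : ℝ) = x * √x := by
  rw [sqrt_eq_rpow, ← rpow_one_add' hx (by norm_num)]
  norm_num

lemma abs_div_rpow_three_halves_le {n b m c : ℝ} (hm : 0 < m) (hmb : m ≤ b)
    (hn : |n| ≤ c * √m) : |n / b ^ (3 / 2 : ℝ)| ≤ c / m := by
  have hpos : 0 < m * √m := mul_pos hm (sqrt_pos.2 hm)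
  have hle : m * √m ≤ b ^ (3 / 2 : ℝ) := by
    rw [← rpow_three_halves_eq_mul_sqrt hm.le]
    exact rpow_le_rpow hm.le hmb (by norm_num)
  rw [abs_div, abs_of_pos (hpos.trans_le hle)]
  calc |n| / b ^ (3 / 2 : ℝ) ≤ c * √m / (m * √m) :=
        div_le_div₀ ((abs_nonneg n).trans hn) hn hpos hle
    _ = c / m := by field_simp

lemma tendsto_div_self_of_hasDerivAt {f : ℝ → ℝ} {f' : ℝ} (hf : HasDerivAt f f' 0)
    (h0 : f 0 = 0) : Tendsto (fun x => f x / x) (𝓝[≠] 0) (𝓝 f') := by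
  simpa [h0, div_eq_inv_mul] using hf.tendsto_slope_zero

lemma integral_one_add_sq_rpow_neg_three_halves : ∫ t : ℝ, (1 + t ^ 2) ^ (-3 / 2 : ℝ) = 2 := by
  have hderiv (t : ℝ) : HasDerivAt (fun x => sin (arctan x)) ((1 + t ^ 2) ^ (-3 / 2 : ℝ)) t := by
    refine ((hasDerivAt_sin _).comp t (hasDerivAt_arctan t)).congr_deriv ?_
    have hpos : 0 < 1 + t ^ 2 := by positivity
    rw [cos_arctan, neg_div, rpow_neg hpos.le, rpow_three_halves_eq_mul_sqrt hpos.le]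
    field_simp
  have hint : Integrable fun t : ℝ => (1 + t ^ 2) ^ (-3 / 2 : ℝ) := by
    simpa using integrable_rpow_neg_one_add_norm_sq (E := ℝ) (μ := volume) (r := 3) (by simp)
  have hlim {l : Filter ℝ} {x : ℝ} (h : Tendsto arctan l (𝓝 x)) :
      Tendsto (fun t => sin (arctan t)) l (𝓝 (sin x)) :=
    (continuous_sin.tendsto x).comp h
  have := integral_of_hasDerivAt_of_tendsto hderiv hint
    (hlim (tendsto_nhds_of_tendsto_nhdsWithin tendsto_arctan_atBot))
    (hlim (tendsto_nhds_of_tendsto_nhdsWithin tendsto_arctan_atTop))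
  rw [this, sin_neg, sin_pi_div_two]
  norm_num

theorem tendsto_intervalIntegral_of_dominated_of_tendsto_atTop {ι E : Type*}
    [NormedAddCommGroup E] [NormedSpace ℝ E] {l : Filter ι} [l.IsCountablyGenerated]
    {F : ι → ℝ → E} {f : ℝ → E} {g : ℝ → ℝ} {a : ι → ℝ} (ha : Tendsto a l atTop)
    (hF : ∀ᶠ i in l, AEStronglyMeasurable (F i))
    (hbound : ∀ᶠ i in l, ∀ t, |t| ≤ a i → ‖F i t‖ ≤ g t) (hg : Integrable g)
    (hlim : ∀ t, Tendsto (fun i => F i t) l (𝓝 (f t))) :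
    Tendsto (fun i => ∫ t in -a i..a i, F i t) l (𝓝 (∫ t, f t)) := by
  have hind : Tendsto (fun i => ∫ t, (Ioc (-a i) (a i)).indicator (F i) t) l
      (𝓝 (∫ t, f t)) := by
    refine tendsto_integral_filter_of_dominated_convergence (fun t => ‖g t‖) ?_ ?_ hg.norm ?_
    · filter_upwards [hF] with i hi using hi.indicator measurableSet_Ioc
    · filter_upwards [hbound] with i hi
      refine ae_of_all _ fun t => ?_
      by_cases ht : t ∈ Ioc (-a i) (a i)
      · rw [indicator_of_mem ht]
        exact (hi t (abs_le.2 ⟨ht.1.le, ht.2⟩)).trans (le_norm_self _)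
      · rw [indicator_of_notMem ht, norm_zero]
        exact norm_nonneg _
    · refine ae_of_all _ fun t => (hlim t).congr' ?_
      filter_upwards [ha.eventually_gt_atTop |t|] with i hi
      have ht : t ∈ Ioc (-a i) (a i) := ⟨by linarith [neg_abs_le t], (le_abs_self t).trans hi.le⟩
      rw [indicator_of_mem ht]
  refine hind.congr' ?_
  filter_upwards [ha.eventually_ge_atTop 0] with i hi
  rw [integral_indicator measurableSet_Ioc, intervalIntegral.integral_of_le (by linarith)]

/-- `scaledDistSq ε t s = ‖γ₁ t - γ₂ s‖² / ε²` and `scaledNumerator ε t s` is the numerator of the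
Gauss integrand divided by `ε³`; see `integrand_eq_scaledIntegrand`. -/
noncomputable def scaledDistSq (ε t s : ℝ) : ℝ :=
  1 + 4 * (sin (ε * t / 2) / ε) ^ 2 * (1 + ε * cos s)

noncomputable def scaledNumerator (ε t s : ℝ) : ℝ :=
  cos s * ((cos (ε * t) - 1) / ε) + cos (ε * t)

noncomputable def scaledIntegrand (ε t s : ℝ) : ℝ :=
  scaledNumerator ε t s / scaledDistSq ε t s ^ (3 / 2 : ℝ)

lemma one_le_scaledDistSq {ε : ℝ} (hε : |ε| ≤ 1) (t s : ℝ) : 1 ≤ scaledDistSq ε t s := by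
  have hcos : 0 ≤ 1 + ε * cos s := by
    nlinarith [abs_le.1 hε, neg_one_le_cos s, cos_le_one s]
  unfold scaledDistSq
  nlinarith [mul_nonneg (sq_nonneg (sin (ε * t / 2) / ε)) hcos]

lemma integrand_eq_scaledIntegrand {ε : ℝ} (hε : 0 < ε) (hε1 : ε ≤ 1) (t s : ℝ) :
    ε ^ 2 * (cos s * (cos (ε * t) - 1) + ε * cos (ε * t))
        / (2 + ε ^ 2 - 2 * cos (ε * t) + 4 * ε * cos s * sin (ε * t / 2) ^ 2) ^ (3 / 2 : ℝ)
      = scaledIntegrand ε t s := by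
  have hcos : cos (ε * t) = 1 - 2 * sin (ε * t / 2) ^ 2 := by
    rw [← cos_two_mul_eq_one_sub]; ring_nf
  have hden : 2 + ε ^ 2 - 2 * cos (ε * t) + 4 * ε * cos s * sin (ε * t / 2) ^ 2
      = ε ^ 2 * scaledDistSq ε t s := by
    rw [scaledDistSq, hcos]; field_simp; ring
  have hnum : ε ^ 2 * (cos s * (cos (ε * t) - 1) + ε * cos (ε * t))
      = ε ^ 3 * scaledNumerator ε t s := by
    rw [scaledNumerator]; field_simp
  have hε3 : (ε ^ 2) ^ (3 / 2 : ℝ) = ε ^ 3 := by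
    rw [← rpow_natCast, ← rpow_mul hε.le]; norm_num
  rw [hden, hnum, mul_rpow (sq_nonneg ε) (zero_le_one.trans (one_le_scaledDistSq
    (abs_le.2 ⟨by linarith, hε1⟩) t s)), hε3, mul_div_mul_left _ _ (by positivity), scaledIntegrand]

lemma continuous_scaledIntegrand {ε : ℝ} (hε : |ε| ≤ 1) :
    Continuous fun p : ℝ × ℝ => scaledIntegrand ε p.1 p.2 := by
  refine Continuous.div (by unfold scaledNumerator; fun_prop)
    ((by unfold scaledDistSq; fun_prop : Continuous fun p : ℝ × ℝ => scaledDistSq ε p.1 p.2)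
      |>.rpow_const fun _ => Or.inr (by norm_num)) fun p => ?_
  exact (rpow_pos_of_pos (zero_lt_one.trans_le (one_le_scaledDistSq hε _ _)) _).ne'

lemma tendsto_scaledDistSq (t s : ℝ) :
    Tendsto (fun ε => scaledDistSq ε t s) (𝓝[≠] 0) (𝓝 (1 + t ^ 2)) := by
  have hsin : Tendsto (fun ε => sin (ε * t / 2) / ε) (𝓝[≠] 0) (𝓝 (t / 2)) :=
    tendsto_div_self_of_hasDerivAt
      (by simpa [mul_div_assoc] using ((hasDerivAt_id (0 : ℝ)).mul_const (t / 2)).sin) (by simp)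
  have hcos : Tendsto (fun ε => 1 + ε * cos s) (𝓝[≠] 0) (𝓝 1) := by
    simpa using ((by fun_prop : Continuous fun ε : ℝ => 1 + ε * cos s).tendsto 0).mono_left
      nhdsWithin_le_nhds
  have h := ((hsin.pow 2).const_mul 4 |>.mul hcos).const_add 1
  rwa [show 1 + 4 * (t / 2) ^ 2 * 1 = 1 + t ^ 2 by ring] at h

lemma tendsto_scaledNumerator (t s : ℝ) :
    Tendsto (fun ε => scaledNumerator ε t s) (𝓝[≠] 0) (𝓝 1) := by
  have hslope : Tendsto (fun ε => (cos (ε * t) - 1) / ε) (𝓝[≠] 0) (𝓝 0) :=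
    tendsto_div_self_of_hasDerivAt
      (by simpa using (((hasDerivAt_id (0 : ℝ)).mul_const t).cos).sub_const 1) (by simp)
  have hcos : Tendsto (fun ε => cos (ε * t)) (𝓝[≠] 0) (𝓝 1) := by
    simpa using ((by fun_prop : Continuous fun ε : ℝ => cos (ε * t)).tendsto 0).mono_left
      nhdsWithin_le_nhds
  have h := (hslope.const_mul (cos s)).add hcos
  rwa [mul_zero, zero_add] at h

lemma tendsto_scaledIntegrand (t s : ℝ) :
    Tendsto (fun ε => scaledIntegrand ε t s) (𝓝[≠] 0) (𝓝 ((1 + t ^ 2) ^ (-3 / 2 : ℝ))) := by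
  have hpos : 0 < (1 + t ^ 2) ^ (3 / 2 : ℝ) := by positivity
  have h := (tendsto_scaledNumerator t s).div
    ((tendsto_scaledDistSq t s).rpow_const (Or.inr (by norm_num))) hpos.ne'
  rwa [neg_div, rpow_neg (by positivity), ← one_div]

lemma div_nine_le_scaledDistSq {ε t : ℝ} (hε : 0 < ε) (hε2 : ε ≤ 1 / 2) (ht : ε * |t| ≤ π)
    (s : ℝ) : (1 + t ^ 2) / 9 ≤ scaledDistSq ε t s := by
  have hx : |ε * t / 2| ≤ π / 2 := by
    rw [abs_div, abs_mul, abs_of_pos hε, abs_two]; linarith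
  have hjordan : t ^ 2 / π ^ 2 ≤ (sin (ε * t / 2) / ε) ^ 2 := by
    have h := pow_le_pow_left₀ (by positivity) (mul_abs_le_abs_sin hx) 2
    rw [mul_pow, sq_abs, sq_abs, div_pow] at h
    rw [div_pow, le_div_iff₀ (by positivity)]
    calc t ^ 2 / π ^ 2 * ε ^ 2 = 2 ^ 2 / π ^ 2 * (ε * t / 2) ^ 2 := by ring
      _ ≤ sin (ε * t / 2) ^ 2 := h
  have hπ : π ^ 2 ≤ 16 := by nlinarith [pi_lt_four, pi_pos]
  have hquot : t ^ 2 / 16 ≤ t ^ 2 / π ^ 2 :=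
    div_le_div_of_nonneg_left (sq_nonneg t) (by positivity) hπ
  have hcos : 1 / 2 ≤ 1 + ε * cos s := by nlinarith [neg_one_le_cos s]
  unfold scaledDistSq
  nlinarith [mul_le_mul hjordan hcos (by norm_num) (sq_nonneg _), sq_nonneg t]

lemma abs_scaledNumerator_le {ε t : ℝ} (hε : 0 < ε) (ht : ε * |t| ≤ π) (s : ℝ) :
    |scaledNumerator ε t s| ≤ 1 + 2 * |t| := by
  have hcos : |cos (ε * t) - 1| ≤ (ε * t) ^ 2 / 2 := by
    rw [abs_of_nonpos (by linarith [cos_le_one (ε * t)])]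
    linarith [one_sub_sq_div_two_le_cos (x := ε * t)]
  have hslope : |(cos (ε * t) - 1) / ε| ≤ 2 * |t| := by
    rw [abs_div, abs_of_pos hε, div_le_iff₀ hε]
    have hεt : 0 ≤ ε * |t| := by positivity
    have hsq : (ε * t) ^ 2 = (ε * |t|) * (ε * |t|) := by rw [← sq, mul_pow, mul_pow, sq_abs]
    nlinarith [mul_le_mul_of_nonneg_left ht hεt, mul_le_mul_of_nonneg_right pi_lt_four.le hεt]
  calc |scaledNumerator ε t s|
      ≤ |cos s| * |(cos (ε * t) - 1) / ε| + |cos (ε * t)| := by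
        rw [scaledNumerator, ← abs_mul]; exact abs_add_le _ _
    _ ≤ 1 * (2 * |t|) + 1 := by
        gcongr
        · exact abs_cos_le_one s
        · exact abs_cos_le_one _
    _ = 1 + 2 * |t| := by ring

lemma abs_scaledIntegrand_le {ε t : ℝ} (hε : 0 < ε) (hε2 : ε ≤ 1 / 2) (ht : ε * |t| ≤ π)
    (s : ℝ) : |scaledIntegrand ε t s| ≤ 81 * (1 + t ^ 2)⁻¹ := by
  have hsqrt : 1 + 2 * |t| ≤ 9 * √((1 + t ^ 2) / 9) := by
    rw [← div_le_iff₀' (by norm_num), le_sqrt (by positivity) (by positivity)]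
    nlinarith [sq_abs t, sq_nonneg (|t| - 2)]
  have h := abs_div_rpow_three_halves_le (by positivity) (div_nine_le_scaledDistSq hε hε2 ht s)
    ((abs_scaledNumerator_le hε ht s).trans hsqrt)
  exact h.trans_eq (by field_simp; norm_num)

lemma eventually_pos_le_half_mul_abs_le_pi (t : ℝ) :
    ∀ᶠ ε in 𝓝[>] (0 : ℝ), 0 < ε ∧ ε ≤ 1 / 2 ∧ ε * |t| ≤ π := by
  have hε : Tendsto (fun ε : ℝ => ε) (𝓝[>] 0) (𝓝 0) := nhdsWithin_le_nhds
  have hεt : Tendsto (fun ε : ℝ => ε * |t|) (𝓝[>] 0) (𝓝 0) := by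
    simpa using hε.mul_const |t|
  filter_upwards [self_mem_nhdsWithin, hε.eventually_le_const (by norm_num : (0 : ℝ) < 1 / 2),
    hεt.eventually_le_const pi_pos] with ε h₁ h₂ h₃ using ⟨h₁, h₂, h₃⟩

lemma tendsto_integral_scaledIntegrand (t : ℝ) :
    Tendsto (fun ε => ∫ s in -π..π, scaledIntegrand ε t s) (𝓝[>] 0)
      (𝓝 (2 * π * (1 + t ^ 2) ^ (-3 / 2 : ℝ))) := by
  have h := intervalIntegral.tendsto_integral_filter_of_dominated_convergence
    (a := -π) (b := π) (μ := volume)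
    (fun _ => 81 * (1 + t ^ 2)⁻¹) ?_ ?_ intervalIntegrable_const
    (ae_of_all _ fun s _ => (tendsto_scaledIntegrand t s).mono_left (nhdsGT_le_nhdsNE 0))
  · rwa [intervalIntegral.integral_const, smul_eq_mul, sub_neg_eq_add, ← two_mul] at h
  · filter_upwards [eventually_pos_le_half_mul_abs_le_pi t] with ε ⟨hε, hε2, _⟩
    exact ((continuous_scaledIntegrand (abs_le.2 ⟨by linarith, by linarith⟩)).comp
      (Continuous.prodMk_right t)).aestronglyMeasurable
  · filter_upwards [eventually_pos_le_half_mul_abs_le_pi t] with ε ⟨hε, hε2, ht⟩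
    exact ae_of_all _ fun s _ => abs_scaledIntegrand_le hε hε2 ht s

lemma tendsto_integral_integral_scaledIntegrand :
    Tendsto (fun ε => ∫ t in -(π / ε)..π / ε, ∫ s in -π..π, scaledIntegrand ε t s) (𝓝[>] 0)
      (𝓝 (4 * π)) := by
  have hsmall : Ioc 0 (1 / 2) ∈ 𝓝[>] (0 : ℝ) := Ioc_mem_nhdsGT (by norm_num)
  have h := tendsto_intervalIntegral_of_dominated_of_tendsto_atTop
    (g := fun t => 81 * (1 + t ^ 2)⁻¹ * |π - -π|)
    (by simpa [div_eq_mul_inv] using tendsto_inv_nhdsGT_zero.const_mul_atTop pi_pos) ?_ ?_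
    ((integrable_inv_one_add_sq.const_mul 81).mul_const _) tendsto_integral_scaledIntegrand
  · rwa [integral_const_mul, integral_one_add_sq_rpow_neg_three_halves,
      show 2 * π * 2 = 4 * π by ring] at h
  · filter_upwards [hsmall] with ε ⟨hε, hε2⟩
    exact (intervalIntegral.continuous_parametric_intervalIntegral_of_continuous'
      (continuous_scaledIntegrand (abs_le.2 ⟨by linarith, by linarith⟩)) _ _).aestronglyMeasurable
  · filter_upwards [hsmall] with ε ⟨hε, hε2⟩ t ht
    exact intervalIntegral.norm_integral_le_of_norm_le_const fun s _ =>
      abs_scaledIntegrand_le hε hε2 ((le_div_iff₀' hε).1 ht) s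

theorem gauss_linking_integral_hopf_link_tendsto_one :
    Tendsto (fun ε : ℝ => (1 / (4 * π)) *
        ∫ t in (-(π / ε))..(π / ε), ∫ s in (-π)..π,
          ε ^ 2 * (Real.cos s * (Real.cos (ε * t) - 1) + ε * Real.cos (ε * t))
            / (2 + ε ^ 2 - 2 * Real.cos (ε * t)
                + 4 * ε * Real.cos s * Real.sin (ε * t / 2) ^ 2) ^ ((3 : ℝ) / 2))
      (𝓝[>] 0) (𝓝 1) := by
  have h := tendsto_integral_integral_scaledIntegrand.const_mul (1 / (4 * π))
  rw [one_div_mul_cancel (by positivity)] at h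
  refine h.congr' ?_
  filter_upwards [Ioc_mem_nhdsGT one_pos] with ε ⟨hε, hε1⟩
  simp_rw [integrand_eq_scaledIntegrand hε hε1]
end

section
/- Let F(s, t) = −arctan(st/√(1 + s² + t²)). Then for all real numbers a, b, c, d, the iterated integral ∫_c^d ∫_a^b −1/(1 + s² + t²)^{3/2} ds dt equals F(b, d) − F(a, d) − F(b, c) + F(a, c). -/
/-!
With `k = 1 + t²` the inner integrand `-1 / (k + s²)^{3/2}` is an exact derivative in `s`, since
`s / √(k + s²)` has derivative `k / (k + s²)^{3/2}`. The inner integral thus becomes the difference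
between `s = b` and `s = a` of `-s / ((1 + t²) √(1 + s² + t²))`, which is exactly `∂F/∂t (s, t)`;
the fundamental theorem of calculus in `t` then gives the formula.
-/

open Real

/-- The mixed antiderivative `F(s, t) = -arctan (s t / √(1 + s² + t²))` of the Gauss
linking integrand of two perpendicular skew lines. -/
noncomputable def F (s t : ℝ) : ℝ := -Real.arctan (s * t / Real.sqrt (1 + s ^ 2 + t ^ 2))

lemma rpow_three_halves {x : ℝ} (hx : 0 ≤ x) : x ^ ((3 : ℝ) / 2) = x * √x := by
  rw [show (3 : ℝ) / 2 = 1 + 1 / 2 by norm_num, rpow_add' hx (by norm_num), rpow_one,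
    sqrt_eq_rpow]

lemma hasDerivAt_sqrt_add_sq {k s : ℝ} (h : 0 < k + s ^ 2) :
    HasDerivAt (fun s => √(k + s ^ 2)) (s / √(k + s ^ 2)) s := by
  refine (((hasDerivAt_pow 2 s).const_add k).sqrt h.ne').congr_deriv ?_
  field_simp
  ring

lemma hasDerivAt_div_sqrt_add_sq {k s : ℝ} (h : 0 < k + s ^ 2) :
    HasDerivAt (fun s => s / √(k + s ^ 2)) (k / (k + s ^ 2) ^ ((3 : ℝ) / 2)) s := by
  refine ((hasDerivAt_id' s).div (hasDerivAt_sqrt_add_sq h) (sqrt_pos.mpr h).ne').congr_deriv ?_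
  rw [rpow_three_halves h.le]
  field_simp
  rw [sq_sqrt h.le]
  ring

lemma integral_one_div_add_sq_rpow_three_halves {k : ℝ} (hk : 0 < k) (a b : ℝ) :
    ∫ s in a..b, 1 / (k + s ^ 2) ^ ((3 : ℝ) / 2) = (b / √(k + b ^ 2) - a / √(k + a ^ 2)) / k := by
  have hcont : Continuous fun s : ℝ => 1 / (k + s ^ 2) ^ ((3 : ℝ) / 2) :=
    continuous_const.div ((by fun_prop : Continuous fun s : ℝ => k + s ^ 2).rpow_const
      fun _ => Or.inr (by norm_num)) fun s => (rpow_pos_of_pos (by positivity) _).ne'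
  rw [intervalIntegral.integral_eq_sub_of_hasDerivAt (fun s _ => ?_) (hcont.intervalIntegrable a b),
    sub_div]
  refine ((hasDerivAt_div_sqrt_add_sq (by positivity)).div_const k).congr_deriv ?_
  field_simp

noncomputable def dFdt (s t : ℝ) : ℝ := -s / ((1 + t ^ 2) * √(1 + s ^ 2 + t ^ 2))

lemma hasDerivAt_F (s t : ℝ) : HasDerivAt (F s) (dFdt s t) t := by
  have hq : 0 < 1 + s ^ 2 + t ^ 2 := by positivity
  have hquot : HasDerivAt (fun t => s * t / √(1 + s ^ 2 + t ^ 2)) _ t :=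
    ((hasDerivAt_id' t).const_mul s).div (hasDerivAt_sqrt_add_sq hq) (sqrt_pos.mpr hq).ne'
  refine hquot.arctan.neg.congr_deriv ?_
  unfold dFdt
  field_simp
  rw [sq_sqrt hq.le]
  ring

lemma continuous_dFdt (s : ℝ) : Continuous (dFdt s) :=
  continuous_const.div (by fun_prop) fun t => by positivity

lemma integral_neg_one_div_rpow_three_halves (a b t : ℝ) :
    ∫ s in a..b, -1 / (1 + s ^ 2 + t ^ 2) ^ ((3 : ℝ) / 2) = dFdt b t - dFdt a t := by
  have hswap : (fun s => -1 / (1 + s ^ 2 + t ^ 2) ^ ((3 : ℝ) / 2))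
      = fun s => -(1 / (1 + t ^ 2 + s ^ 2) ^ ((3 : ℝ) / 2)) := by
    funext s
    rw [add_right_comm, neg_div]
  rw [hswap, intervalIntegral.integral_neg,
    integral_one_div_add_sq_rpow_three_halves (by positivity), dFdt, dFdt,
    add_right_comm 1 (b ^ 2), add_right_comm 1 (a ^ 2)]
  field_simp
  ring

theorem rectangle_formula (a b c d : ℝ) :
    ∫ t in c..d, ∫ s in a..b, -1 / (1 + s ^ 2 + t ^ 2) ^ ((3 : ℝ) / 2)
      = F b d - F a d - F b c + F a c := by
  calc ∫ t in c..d, ∫ s in a..b, -1 / (1 + s ^ 2 + t ^ 2) ^ ((3 : ℝ) / 2)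
      = ∫ t in c..d, (dFdt b t - dFdt a t) :=
        intervalIntegral.integral_congr fun t _ => integral_neg_one_div_rpow_three_halves a b t
    _ = (F b d - F a d) - (F b c - F a c) :=
        intervalIntegral.integral_eq_sub_of_hasDerivAt
          (fun t _ => (hasDerivAt_F b t).sub (hasDerivAt_F a t))
          (((continuous_dFdt b).sub (continuous_dFdt a)).intervalIntegrable c d)
    _ = F b d - F a d - F b c + F a c := by ring
end
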